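/- arXiv:2309.11391 — 2 statements merged into one kernel-verified Lean document; each statement's English description precedes it below -/
import Mathlib

section
/- Every metric space with property Q is cut stable. Specifically, if M has property Q with constant Q_M, then M is C-cut stable with C = 8·Q_M + 1: for all k = l + m, bounded functions f : [ℕ]^l → M, g : [ℕ]^m → M, infinite sets L ⊆ ℕ, and cuts P, Q of {1,...,k} of size l, inf_{n̄ ∈ [L]^k} d_M(f(n_i : i ∈ P), g(n_i : i ∈ P^c)) ≤ (8Q_M + 1) · sup_{n̄ ∈ [L]^k} d_M(f(n_i : i ∈ Q), g(n_i : i ∈ Q^c)). -/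
open Filter Topology
open scoped ZeroAtInfty ENNReal NNReal

/-- Increasing `k`-tuples of naturals: the vertices `[ℕ]^k` of the interlacing graph. -/
def IncTuple (k : ℕ) := {f : Fin k → ℕ // StrictMono f}

/-- `m₁ ≤ n₁ ≤ m₂ ≤ n₂ ≤ ⋯ ≤ m_k ≤ n_k`. -/
def InterLE {k : ℕ} (m n : Fin k → ℕ) : Prop :=
  (∀ i, m i ≤ n i) ∧ ∀ (i : ℕ) (h : i + 1 < k), n ⟨i, Nat.lt_of_succ_lt h⟩ ≤ m ⟨i + 1, h⟩

/-- The pair `(m, n)` interlaces. -/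
def Interlacing {k : ℕ} (m n : Fin k → ℕ) : Prop := InterLE m n ∨ InterLE n m

/-- `m₁ ≤ n₁ < m₂ ≤ n₂ < ⋯ < m_k ≤ n_k`. -/
def StrongInterLE {k : ℕ} (m n : Fin k → ℕ) : Prop :=
  (∀ i, m i ≤ n i) ∧ ∀ (i : ℕ) (h : i + 1 < k), n ⟨i, Nat.lt_of_succ_lt h⟩ < m ⟨i + 1, h⟩

/-- The pair `(m, n)` is strongly interlacing. -/
def StronglyInterlacing {k : ℕ} (m n : Fin k → ℕ) : Prop :=
  StrongInterLE m n ∨ StrongInterLE n m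

/-- The interlacing graph on `[ℕ]^k`. -/
def interGraph (k : ℕ) : SimpleGraph (IncTuple k) where
  Adj m n := m ≠ n ∧ Interlacing m.1 n.1
  symm := ⟨fun _ _ h => ⟨h.1.symm, h.2.symm⟩⟩
  loopless := ⟨fun _ h => h.1 rfl⟩

/-- The interlacing graph metric `d_I`. -/
noncomputable def dI {k : ℕ} (m n : IncTuple k) : ℕ := (interGraph k).dist m n

/-- All entries of the tuple belong to `L`. -/
def memAll {k : ℕ} (L : Set ℕ) (m : IncTuple k) : Prop := ∀ i, m.1 i ∈ L

/-- `m̄ < n̄`: every entry of `m` is below every entry of `n`. -/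
def ordLT {k : ℕ} (m n : IncTuple k) : Prop := ∀ i j, m.1 i < n.1 j

/-- Kalton's `Q(ε, δ)`-property of a metric space. -/
def HasQProp (M : Type*) [MetricSpace M] (ε δ : ℝ) : Prop :=
  ∀ (k : ℕ) (f : IncTuple k → M),
    (∀ m n : IncTuple k, dist (f m) (f n) ≤ δ * dI m n) →
    ∃ L : Set ℕ, L.Infinite ∧ ∀ m n : IncTuple k, memAll L m → memAll L n → ordLT m n →
      dist (f m) (f n) < ε

/-- The modulus `Δ_M(ε)`. -/
noncomputable def DeltaMod (M : Type*) [MetricSpace M] (ε : ℝ) : ℝ :=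
  sSup {δ : ℝ | 0 ≤ δ ∧ HasQProp M ε δ}

/-- The constant `q_M`. -/
noncomputable def qMod (M : Type*) [MetricSpace M] : ℝ :=
  sSup {c : ℝ | 0 ≤ c ∧ ∀ ε : ℝ, 0 < ε → c * ε ≤ DeltaMod M ε}

/-- Boundedness of a map into a metric space. -/
def IsBddMap {α : Type*} {M : Type*} [MetricSpace M] (f : α → M) : Prop :=
  ∃ R : ℝ, ∀ x y, dist (f x) (f y) ≤ R

/-- Property `Q` with constant `C`: every Lipschitz map on an interlacing graph
concentrates on `[L]^k` up to `C·Lip(f)`. -/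
def HasPropQConst (M : Type*) [MetricSpace M] (C : ℝ) : Prop :=
  ∀ (k : ℕ) (f : IncTuple k → M) (K : ℝ), 0 ≤ K →
    (∀ m n : IncTuple k, dist (f m) (f n) ≤ K * dI m n) →
    ∃ L : Set ℕ, L.Infinite ∧ ∀ m n : IncTuple k, memAll L m → memAll L n →
      dist (f m) (f n) ≤ C * K

/-- Property `Q`. -/
def HasPropQ (M : Type*) [MetricSpace M] : Prop := ∃ C : ℝ, 0 ≤ C ∧ HasPropQConst M C

/-- The property `Q` constant `Q_M`. -/
noncomputable def QConst (M : Type*) [MetricSpace M] : ℝ :=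
  sInf {C : ℝ | 0 ≤ C ∧ HasPropQConst M C}

theorem compl_card {l m : ℕ} (P : Finset (Fin (l + m))) (hP : P.card = l) : Pᶜ.card = m := by
  rw [Finset.card_compl, hP, Fintype.card_fin]; omega

/-- The increasing subtuple `(n_i : i ∈ P)`. -/
def subTuple {k j : ℕ} (n : Fin k → ℕ) (P : Finset (Fin k)) (h : P.card = j) :
    Fin j → ℕ := fun i => n (P.orderEmbOfFin h i)

/-- The set of distances `d_M(f(n_i : i ∈ P), g(n_i : i ∈ P^c))` over `n̄ ∈ [L]^{l+m}`. -/
def cutDistSet {l m : ℕ} {M : Type*} [MetricSpace M]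
    (f : (Fin l → ℕ) → M) (g : (Fin m → ℕ) → M) (L : Set ℕ)
    (P : Finset (Fin (l + m))) (hP : P.card = l) : Set ℝ :=
  {d : ℝ | ∃ n : Fin (l + m) → ℕ, StrictMono n ∧ (∀ i, n i ∈ L) ∧
    d = dist (f (subTuple n P hP)) (g (subTuple n Pᶜ (compl_card P hP)))}

/-- `C`-cut stability. -/
def CutStableWith (M : Type*) [MetricSpace M] (C : ℝ) : Prop :=
  ∀ (l m : ℕ) (f : (Fin l → ℕ) → M) (g : (Fin m → ℕ) → M),
    IsBddMap f → IsBddMap g → ∀ L : Set ℕ, L.Infinite →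
    ∀ (P Q : Finset (Fin (l + m))) (hP : P.card = l) (hQ : Q.card = l),
      sInf (cutDistSet f g L P hP) ≤ C * sSup (cutDistSet f g L Q hQ)

/-- A permutation of `{1,…,l+m}` preserving the order on `{1,…,l}` and on `{l+1,…,l+m}`. -/
def OrderPreservingPerm {l m : ℕ} (π : Equiv.Perm (Fin (l + m))) : Prop :=
  StrictMono (fun i : Fin l => π (Fin.castAdd m i)) ∧
  StrictMono (fun j : Fin m => π (Fin.natAdd l j))

/-- Distances `d_M(f(n_{π(1)},…,n_{π(l)}), g(n_{π(l+1)},…,n_{π(l+m)}))` over `n̄ ∈ [L]^{l+m}`. -/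
def permDistSet {l m : ℕ} {M : Type*} [MetricSpace M]
    (f : (Fin l → ℕ) → M) (g : (Fin m → ℕ) → M) (L : Set ℕ)
    (π : Equiv.Perm (Fin (l + m))) : Set ℝ :=
  {d : ℝ | ∃ n : Fin (l + m) → ℕ, StrictMono n ∧ (∀ i, n i ∈ L) ∧
    d = dist (f (fun i => n (π (Fin.castAdd m i)))) (g (fun j => n (π (Fin.natAdd l j))))}

/-- `C`-upper stability. -/
def UpperStableWith (M : Type*) [MetricSpace M] (C : ℝ) : Prop :=
  ∀ (l m : ℕ) (f : (Fin l → ℕ) → M) (g : (Fin m → ℕ) → M),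
    IsBddMap f → IsBddMap g → ∀ L : Set ℕ, L.Infinite →
    ∀ π : Equiv.Perm (Fin (l + m)), OrderPreservingPerm π →
      sInf (permDistSet f g L (Equiv.refl _)) ≤ C * sSup (permDistSet f g L π)

/-- The modulus of continuity `ω_h`. -/
noncomputable def omegaMod {M N : Type*} [MetricSpace M] [MetricSpace N] (h : M → N)
    (t : ℝ) : ℝ≥0∞ :=
  ⨆ p : {p : M × M // dist p.1 p.2 ≤ t}, edist (h p.1.1) (h p.1.2)

/-- The compression modulus `ρ_h`. -/
noncomputable def rhoMod {M N : Type*} [MetricSpace M] [MetricSpace N] (h : M → N)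
    (t : ℝ) : ℝ≥0∞ :=
  ⨅ p : {p : M × M // t ≤ dist p.1 p.2}, edist (h p.1.1) (h p.1.2)

/-- A coarse embedding, expressed via the moduli. -/
def CoarseEmbMod {M N : Type*} [MetricSpace M] [MetricSpace N] (h : M → N) : Prop :=
  (∀ t : ℝ, omegaMod h t < ⊤) ∧ Tendsto (rhoMod h) atTop (𝓝 ⊤)

/-- A uniform embedding, expressed via the moduli. -/
def UniformEmbMod {M N : Type*} [MetricSpace M] [MetricSpace N] (h : M → N) : Prop :=
  Tendsto (omegaMod h) (𝓝[>] (0 : ℝ)) (𝓝 0) ∧ ∀ t : ℝ, 0 < t → 0 < rhoMod h t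

/-- A free ultrafilter on `ℕ`. -/
def FreeUF (U : Ultrafilter ℕ) : Prop := (U : Filter ℕ) ≤ Filter.cofinite

/-- The iterated ultrafilter limit `lim_{n₁,U₁} ⋯ lim_{n_k,U_k} F(n₁,…,n_k)`. -/
noncomputable def ultraLim : (k : ℕ) → (Fin k → Ultrafilter ℕ) → ((Fin k → ℕ) → ℝ) → ℝ
  | 0, _, F => F (fun i => i.elim0)
  | k + 1, U, F => ultraLim k (fun i => U i.castSucc)
      (fun n => limUnder (U (Fin.last k)) (fun j => F (Fin.snoc n j)))

/-- An unrooted (countably branching) tree of height `k` in `X`. -/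
def TreeU (X : Type*) (k : ℕ) := (i : Fin k) → (Fin (i.1 + 1) → ℕ) → X

/-- A rooted (countably branching) tree of height `k` in `X`. -/
def TreeR (X : Type*) (k : ℕ) := (i : Fin (k + 1)) → (Fin i.1 → ℕ) → X

/-- A normalized unrooted tree takes values in the unit sphere. -/
def NormalizedU {X : Type*} [NormedAddCommGroup X] {k : ℕ} (t : TreeU X k) : Prop :=
  ∀ i v, ‖t i v‖ = 1

/-- A normalized rooted tree takes values in the unit sphere. -/
def NormalizedR {X : Type*} [NormedAddCommGroup X] {k : ℕ} (t : TreeR X k) : Prop :=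
  ∀ i v, ‖t i v‖ = 1

/-- `∀_{U₁} n₁ ⋯ ∀_{U_j} n_j, P(n₁,…,n_j)`. -/
def iterEventually : (j : ℕ) → (Fin j → Ultrafilter ℕ) → ((Fin j → ℕ) → Prop) → Prop
  | 0, _, P => P (fun i => i.elim0)
  | j + 1, U, P => iterEventually j (fun i => U i.castSucc)
      (fun n => ∀ᶠ a in U (Fin.last j), P (Fin.snoc n a))

/-- An unrooted tree is `Ū`-weakly null. -/
def WeaklyNullU {X : Type*} [NormedAddCommGroup X] [NormedSpace ℝ X] {k : ℕ}
    (U : Fin k → Ultrafilter ℕ) (t : TreeU X k) : Prop :=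
  ∀ i : Fin k, iterEventually i.1 (fun j => U (Fin.castLE i.isLt.le j))
    (fun pre => ∀ φ : X →L[ℝ] ℝ,
      Tendsto (fun a : ℕ => φ (t i (Fin.snoc pre a))) (U i) (𝓝 0))

/-- A rooted tree is `Ū`-weakly null. -/
def WeaklyNullR {X : Type*} [NormedAddCommGroup X] [NormedSpace ℝ X] {k : ℕ}
    (U : Fin k → Ultrafilter ℕ) (t : TreeR X k) : Prop :=
  ∀ i : Fin k, iterEventually i.1 (fun j => U (Fin.castLE i.isLt.le j))
    (fun pre => ∀ φ : X →L[ℝ] ℝ,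
      Tendsto (fun a : ℕ => φ (t i.succ (Fin.snoc pre a))) (U i) (𝓝 0))

/-- The norm `N_t^{Ū}(x ⊕ Σ aᵢ eᵢ)`. -/
noncomputable def treeNorm {X : Type*} [NormedAddCommGroup X] [NormedSpace ℝ X] {k : ℕ}
    (U : Fin k → Ultrafilter ℕ) (t : TreeU X k) (x : X) (a : Fin k → ℝ) : ℝ :=
  ultraLim k U (fun n => ‖x + ∑ i : Fin k, a i • t i (fun j => n (Fin.castLE i.isLt j))‖)

/-- The number of elements of `P` that are `≤ j`. -/
def rankIn {k : ℕ} (P : Finset (Fin k)) (j : Fin k) : ℕ :=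
  (P.filter (fun i => i ≤ j)).card

/-- The `P`-intertwining `s ⊛_P t` of two trees. -/
def intertwine {X : Type*} {l m : ℕ} (P : Finset (Fin (l + m))) (hP : P.card = l)
    (s : TreeU X l) (t : TreeU X m) : TreeU X (l + m) := fun j v =>
  let v' : Fin (l + m) → ℕ := fun p => if h : p.1 < j.1 + 1 then v ⟨p.1, h⟩ else 0
  if hj : j ∈ P then
    s ⟨rankIn P j - 1, by
        have h1 : 0 < rankIn P j :=
          Finset.card_pos.mpr ⟨j, Finset.mem_filter.mpr ⟨hj, le_refl j⟩⟩
        have h2 : rankIn P j ≤ l := (Finset.card_filter_le P _).trans hP.le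
        omega⟩
      (fun b => v' (P.orderEmbOfFin hP ⟨b.1, by
        have h1 : 0 < rankIn P j :=
          Finset.card_pos.mpr ⟨j, Finset.mem_filter.mpr ⟨hj, le_refl j⟩⟩
        have h2 : rankIn P j ≤ l := (Finset.card_filter_le P _).trans hP.le
        have h3 := b.isLt
        omega⟩))
  else
    t ⟨rankIn Pᶜ j - 1, by
        have h1 : 0 < rankIn Pᶜ j :=
          Finset.card_pos.mpr ⟨j, Finset.mem_filter.mpr ⟨Finset.mem_compl.mpr hj, le_refl j⟩⟩
        have h2 : rankIn Pᶜ j ≤ m := (Finset.card_filter_le Pᶜ _).trans (compl_card P hP).le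
        omega⟩
      (fun b => v' (Pᶜ.orderEmbOfFin (compl_card P hP) ⟨b.1, by
        have h1 : 0 < rankIn Pᶜ j :=
          Finset.card_pos.mpr ⟨j, Finset.mem_filter.mpr ⟨Finset.mem_compl.mpr hj, le_refl j⟩⟩
        have h2 : rankIn Pᶜ j ≤ m := (Finset.card_filter_le Pᶜ _).trans (compl_card P hP).le
        have h3 := b.isLt
        omega⟩))

/-- The unrooted part of a rooted tree. -/
def unroot {X : Type*} {k : ℕ} (t : TreeR X k) : TreeU X k := fun i v => t i.succ v

/-- The summing basis of `c₀`. -/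
noncomputable def summingBasis (n : ℕ) : C₀(ℕ, ℝ) :=
  ⟨⟨fun x => if x ≤ n then 1 else 0, continuous_of_discreteTopology⟩, by
    rw [cocompact_eq_cofinite, Nat.cofinite_eq_atTop]
    refine (tendsto_congr' ?_).mpr tendsto_const_nhds
    filter_upwards [eventually_gt_atTop n] with x hx
    simp [if_neg (not_le.mpr hx)]⟩

/-- The canonical map `[ℕ]^k → c₀`, `n̄ ↦ Σᵢ s_{nᵢ}`. -/
noncomputable def interMap {k : ℕ} (m : Fin k → ℕ) : C₀(ℕ, ℝ) :=
  ∑ i : Fin k, summingBasis (m i)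

/-- Krivine–Maurey stability of a metric space. -/
def StableSpace (M : Type*) [MetricSpace M] : Prop :=
  ∀ U V : Ultrafilter ℕ, FreeUF U → FreeUF V →
    ∀ x y : ℕ → M, Bornology.IsBounded (Set.range x) → Bornology.IsBounded (Set.range y) →
      limUnder (U : Filter ℕ) (fun a => limUnder (V : Filter ℕ) (fun b => dist (x a) (y b)))
        = limUnder (V : Filter ℕ) (fun b => limUnder (U : Filter ℕ) (fun a => dist (x a) (y b)))


/-!
Let `lam` be the supremum of the `Q`-cut distances, and let `H t` be `g` evaluated on the
`Qᶜ`-part of `t ∈ [ℕ]^k` stretched by `x ↦ (k + 1) x + k`. If `s` and `t` interlace, the gaps left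
by stretching allow completing the `Qᶜ`-parts of both stretched tuples by one common `Q`-part, so
`H s` and `H t` are within `lam` of the same value of `f`: `H` is `2 lam`-Lipschitz for `d_I`.
Property `Q` gives an infinite `L₁` on which `H` varies by at most `2 C lam`. For `v, w ∈ [L₁]^k`
whose stretched `Q`-part and `Qᶜ`-part interleave as a `P`-cut, the triangle inequality bounds that
`P`-cut distance by `lam + 2 C lam`. A general `L` reduces to `L = ℕ` through its enumeration.
-/

open Finset

theorem le_sInf_mul {S : Set ℝ} (hS : S.Nonempty) {x K : ℝ} (hK : 0 ≤ K)
    (h : ∀ C ∈ S, x ≤ C * K) : x ≤ sInf S * K := by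
  rcases hK.eq_or_lt with rfl | hK
  · simpa using h _ hS.some_mem
  · rw [← div_le_iff₀ hK]
    exact le_csInf hS fun C hC => (div_le_iff₀ hK).mpr (h C hC)

theorem subTuple_congr {k r : ℕ} {n n' : Fin k → ℕ} {P : Finset (Fin k)} {hP : P.card = r}
    (h : ∀ j ∈ P, n j = n' j) : subTuple n P hP = subTuple n' P hP :=
  funext fun i => h _ (orderEmbOfFin_mem P hP i)

theorem dist_le_mul_dist_of_adj {V : Type*} {G : SimpleGraph V} (hG : G.Preconnected)
    {X : Type*} [PseudoMetricSpace X] {H : V → X} {K : ℝ}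
    (hH : ∀ u v, G.Adj u v → dist (H u) (H v) ≤ K) (u v : V) :
    dist (H u) (H v) ≤ K * G.dist u v := by
  obtain ⟨w, hw⟩ := (hG u v).exists_walk_length_eq_dist
  rw [← hw]
  clear hw
  induction w with
  | nil => simp
  | @cons a b c hab w ih =>
    rw [SimpleGraph.Walk.length_cons, Nat.cast_succ, mul_add_one, add_comm]
    exact (dist_triangle _ _ _).trans (add_le_add (hH a b hab) ih)

section InterlacingGraph

variable {k : ℕ}

theorem InterLE.le_of_lt {t s : Fin k → ℕ} (h : InterLE t s) (ht : Monotone t) {i j : Fin k}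
    (hij : i < j) : s i ≤ t j :=
  (h.2 i (by omega)).trans (ht (Fin.mk_le_of_le_val (by omega)))

theorem interGraph_reachable_of_interLE {t s : IncTuple k} (h : InterLE t.1 s.1) :
    (interGraph k).Reachable t s := by
  by_cases hts : t = s
  · exact hts ▸ .rfl
  · exact SimpleGraph.Adj.reachable ⟨hts, .inl h⟩

def IncTuple.window (c : ℕ → ℕ) (hc : StrictMono c) (i : ℕ) : IncTuple k :=
  ⟨fun j => c (i + j), fun a b hab => hc (by simpa using hab)⟩

theorem interGraph_reachable_window (c : ℕ → ℕ) (hc : StrictMono c) (i : ℕ) :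
    (interGraph k).Reachable (IncTuple.window c hc 0) (IncTuple.window c hc i) := by
  induction i with
  | zero => rfl
  | succ i ih =>
    refine ih.trans (interGraph_reachable_of_interLE ⟨fun j => hc.monotone (by omega), ?_⟩)
    intro j _
    show c (i + 1 + j) ≤ c (i + (j + 1))
    rw [Nat.add_right_comm, Nat.add_assoc]

theorem interGraph_reachable_window_add (t : IncTuple k) {N : ℕ} (hN : ∀ j, t.1 j ≤ N) :
    (interGraph k).Reachable t (IncTuple.window (N + ·) (strictMono_id.const_add N) k) := by
  let c : ℕ → ℕ := fun j => if h : j < k then t.1 ⟨j, h⟩ else N + j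
  have hc : StrictMono c := by
    refine strictMono_nat_of_lt_succ fun j => ?_
    simp only [c]
    split_ifs with h₁ h₂ h₂
    · exact t.2 (Fin.mk_lt_mk.mpr (Nat.lt_succ_self j))
    · have := hN ⟨j, h₁⟩; omega
    · omega
    · omega
  have h₀ : IncTuple.window c hc 0 = t :=
    Subtype.ext <| funext fun j => by simp [IncTuple.window, c]
  have hk : (IncTuple.window c hc k : IncTuple k) =
      IncTuple.window (N + ·) (strictMono_id.const_add N) k :=
    Subtype.ext <| funext fun j => by simp [IncTuple.window, c]
  exact h₀ ▸ hk ▸ interGraph_reachable_window c hc k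

theorem interGraph_preconnected : (interGraph k).Preconnected := fun t s => by
  have hN : ∀ (u : IncTuple k) j, u.1 j ≤ ∑ i, u.1 i := fun u j =>
    single_le_sum (fun _ _ => Nat.zero_le _) (mem_univ j)
  exact (interGraph_reachable_window_add t fun j => (hN t j).trans (Nat.le_add_right _ _)).trans
    (interGraph_reachable_window_add s fun j => (hN s j).trans (Nat.le_add_left _ _)).symm

end InterlacingGraph

section Stretching

variable {k : ℕ}

/-- Consecutive values of `stretch k` are more than `k` apart, leaving room to insert up to `k`
further entries between them. -/
def stretch (k x : ℕ) : ℕ := (k + 1) * x + k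

theorem le_stretch (x : ℕ) : k ≤ stretch k x := Nat.le_add_left _ _

theorem stretch_add_lt_stretch {x y : ℕ} (h : x < y) : stretch k x + k < stretch k y := by
  have : (k + 1) * (x + 1) ≤ (k + 1) * y := Nat.mul_le_mul_left _ h
  unfold stretch
  linarith

theorem stretch_strictMono : StrictMono (stretch k) := fun _ _ h =>
  (Nat.le_add_right _ _).trans_lt (stretch_add_lt_stretch h)

def spread (Q : Finset (Fin k)) (a : Fin k → ℕ) (j : Fin k) : ℕ :=
  if j ∈ Q then (k + 1) * a j + j else stretch k (a j)

theorem strictMono_spread {Q : Finset (Fin k)} {a : Fin k → ℕ} (ha : Monotone a)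
    (hQ : ∀ i j, i < j → i ∉ Q → a i < a j) : StrictMono (spread Q a) := by
  have hlo : ∀ j, (k + 1) * a j + j ≤ spread Q a j := fun j => by
    unfold spread stretch; split_ifs <;> omega
  have hhi : ∀ j, spread Q a j ≤ stretch k (a j) := fun j => by
    unfold spread stretch; split_ifs <;> omega
  intro i j hij
  rcases (ha hij.le).lt_or_eq with h | h
  · have := stretch_add_lt_stretch (k := k) h
    have := hlo j
    have := hhi i
    unfold stretch at *
    omega
  · have hiQ : i ∈ Q := by_contra fun hi => (hQ i j hij hi).ne h
    calc spread Q a i = (k + 1) * a j + i := by rw [spread, if_pos hiQ, h]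
      _ < (k + 1) * a j + j := by simpa using hij
      _ ≤ spread Q a j := hlo j

theorem exists_strictMono_extend {r : ℕ} {e : Fin r → Fin k} (he : StrictMono e) {D : Fin r → ℕ}
    (hD : Monotone D) : ∃ a : Fin k → ℕ, StrictMono a ∧ ∀ i, a (e i) = e i + D i := by
  refine ⟨fun j => j + (univ.filter fun i => e i ≤ j).sup D, fun j j' hjj' => ?_, fun i => ?_⟩
  · have : (univ.filter fun i => e i ≤ j).sup D ≤ (univ.filter fun i => e i ≤ j').sup D :=
      sup_mono fun i hi => by
        simp only [mem_filter, mem_univ, true_and] at hi ⊢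
        exact hi.trans hjj'.le
    exact Nat.add_lt_add_of_lt_of_le hjj' this
  · show (e i : ℕ) + _ = e i + D i
    congr 1
    refine le_antisymm (Finset.sup_le fun i' hi' => hD ?_) (le_sup (by simp))
    exact he.le_iff_le.mp (mem_filter.mp hi').2

theorem exists_strictMono_subTuple_eq_stretch {r : ℕ} (R S : Finset (Fin k)) (hR : R.card = r)
    (hS : S.card = r) :
    ∃ a : Fin k → ℕ, StrictMono a ∧ subTuple a R hR = subTuple (stretch k ∘ Fin.val) S hS := by
  set e := R.orderEmbOfFin hR
  set e' := S.orderEmbOfFin hS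
  have hD : Monotone fun i => stretch k (e' i) - e i := by
    intro i i' hii'
    rcases hii'.lt_or_eq with h | rfl
    · have := stretch_add_lt_stretch (k := k) (e'.strictMono h)
      have := (e i').isLt
      have := (e i).isLt
      show stretch k (e' i) - e i ≤ stretch k (e' i') - e i'
      omega
    · rfl
  obtain ⟨a, ha, hae⟩ := exists_strictMono_extend e.strictMono hD
  refine ⟨a, ha, funext fun i => (hae i).trans ?_⟩
  have := (e i).isLt
  have := le_stretch (k := k) (e' i)
  show (e i : ℕ) + (stretch k (e' i) - e i) = stretch k (e' i)
  omega

theorem exists_memAll_subTuple_stretch_eq {r : ℕ} {L : Set ℕ} (hL : L.Infinite)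
    (R S : Finset (Fin k)) (hR : R.card = r) (hS : S.card = r) :
    ∃ v : IncTuple k, memAll L v ∧ subTuple (stretch k ∘ v.1) R hR =
      subTuple (stretch k ∘ Nat.nth (· ∈ L) ∘ stretch k ∘ Fin.val) S hS := by
  obtain ⟨a, ha, hRS⟩ := exists_strictMono_subTuple_eq_stretch R S hR hS
  exact ⟨⟨Nat.nth (· ∈ L) ∘ a, (Nat.nth_strictMono hL).comp ha⟩,
    fun _ => Nat.nth_mem_of_infinite hL _, congrArg (stretch k ∘ Nat.nth (· ∈ L) ∘ ·) hRS⟩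

end Stretching

section CutDistances

variable {l m : ℕ} {M : Type*} [MetricSpace M] (f : (Fin l → ℕ) → M) (g : (Fin m → ℕ) → M)

def cutDist (P : Finset (Fin (l + m))) (hP : P.card = l) (n : Fin (l + m) → ℕ) : ℝ :=
  dist (f (subTuple n P hP)) (g (subTuple n Pᶜ (compl_card P hP)))

def stretchedComplValue (Q : Finset (Fin (l + m))) (hQ : Q.card = l) (t : IncTuple (l + m)) :
    M :=
  g (subTuple (stretch (l + m) ∘ t.1) Qᶜ (compl_card Q hQ))

variable {f g} {Q : Finset (Fin (l + m))} {hQ : Q.card = l} {lam : ℝ}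

/-- `spread Q z` and `spread Q s`, where `z = s` on `Q` and `z = t` off `Q`, agree on `Q`, so both
values of `g` are within `lam` of the same value of `f`. -/
theorem dist_stretchedComplValue_le_of_interLE
    (hlam : ∀ n, StrictMono n → cutDist f g Q hQ n ≤ lam) {t s : IncTuple (l + m)}
    (h : InterLE t.1 s.1) :
    dist (stretchedComplValue g Q hQ t) (stretchedComplValue g Q hQ s) ≤ 2 * lam := by
  let z : Fin (l + m) → ℕ := fun j => if j ∈ Q then s.1 j else t.1 j
  have hz : StrictMono (spread Q z) := by
    refine strictMono_spread (fun i j hij => ?_) (fun i j hij hi => ?_)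
    · rcases hij.lt_or_eq with hij | rfl
      · simp only [z]
        split_ifs
        exacts [s.2.monotone hij.le, h.le_of_lt t.2.monotone hij,
          (h.1 i).trans (s.2.monotone hij.le), t.2.monotone hij.le]
      · rfl
    · simp only [z, if_neg hi]
      split_ifs
      exacts [(t.2 hij).trans_le (h.1 j), t.2 hij]
  have hQ_eq : subTuple (spread Q z) Q hQ = subTuple (spread Q s.1) Q hQ :=
    subTuple_congr fun j hj => by simp [spread, z, hj]
  have hz_compl : subTuple (spread Q z) Qᶜ (compl_card Q hQ) =
      subTuple (stretch (l + m) ∘ t.1) Qᶜ (compl_card Q hQ) :=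
    subTuple_congr fun j hj => by simp [spread, z, mem_compl.mp hj]
  have hs_compl : subTuple (spread Q s.1) Qᶜ (compl_card Q hQ) =
      subTuple (stretch (l + m) ∘ s.1) Qᶜ (compl_card Q hQ) :=
    subTuple_congr fun j hj => by simp [spread, mem_compl.mp hj]
  calc dist (stretchedComplValue g Q hQ t) (stretchedComplValue g Q hQ s)
      ≤ dist (g (subTuple (spread Q z) Qᶜ _)) (f (subTuple (spread Q z) Q hQ)) +
          dist (f (subTuple (spread Q s.1) Q hQ)) (g (subTuple (spread Q s.1) Qᶜ _)) := by
        rw [stretchedComplValue, stretchedComplValue, ← hz_compl, ← hs_compl, ← hQ_eq]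
        exact dist_triangle _ _ _
    _ ≤ lam + lam := by
        rw [dist_comm]
        exact add_le_add (hlam _ hz) (hlam _ (strictMono_spread s.2.monotone fun _ _ h _ => s.2 h))
    _ = 2 * lam := by ring

theorem dist_stretchedComplValue_le (hlam : ∀ n, StrictMono n → cutDist f g Q hQ n ≤ lam)
    (t s : IncTuple (l + m)) :
    dist (stretchedComplValue g Q hQ t) (stretchedComplValue g Q hQ s) ≤ 2 * lam * dI t s :=
  dist_le_mul_dist_of_adj interGraph_preconnected (fun _ _ hts => hts.2.elim
    (dist_stretchedComplValue_le_of_interLE hlam)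
    fun h => (dist_comm _ _).trans_le (dist_stretchedComplValue_le_of_interLE hlam h)) t s

theorem exists_cutDist_le {C : ℝ} (hC : HasPropQConst M C) (P : Finset (Fin (l + m)))
    (hP : P.card = l) (hlam : ∀ n, StrictMono n → cutDist f g Q hQ n ≤ lam) :
    ∃ n, StrictMono n ∧ cutDist f g P hP n ≤ lam + C * (2 * lam) := by
  have hlam0 : 0 ≤ lam := dist_nonneg.trans (hlam _ Fin.val_strictMono)
  obtain ⟨L₁, hL₁, hconc⟩ := hC _ (stretchedComplValue g Q hQ) (2 * lam) (by positivity)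
    (dist_stretchedComplValue_le hlam)
  obtain ⟨v, hv, hvP⟩ := exists_memAll_subTuple_stretch_eq hL₁ Q P hQ hP
  obtain ⟨w, hw, hwP⟩ := exists_memAll_subTuple_stretch_eq hL₁ Qᶜ Pᶜ (compl_card Q hQ)
    (compl_card P hP)
  refine ⟨stretch (l + m) ∘ Nat.nth (· ∈ L₁) ∘ stretch (l + m) ∘ Fin.val, stretch_strictMono.comp
    ((Nat.nth_strictMono hL₁).comp (stretch_strictMono.comp Fin.val_strictMono)), ?_⟩
  calc cutDist f g P hP (stretch (l + m) ∘ Nat.nth (· ∈ L₁) ∘ stretch (l + m) ∘ Fin.val)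
      = dist (f (subTuple (stretch (l + m) ∘ v.1) Q hQ)) (stretchedComplValue g Q hQ w) := by
        rw [cutDist, stretchedComplValue, hvP, hwP]
    _ ≤ cutDist f g Q hQ (stretch (l + m) ∘ v.1) +
          dist (stretchedComplValue g Q hQ v) (stretchedComplValue g Q hQ w) :=
        dist_triangle _ _ _
    _ ≤ lam + C * (2 * lam) :=
        add_le_add (hlam _ (stretch_strictMono.comp v.2)) (hconc v w hv hw)

end CutDistances

section CutDistSets

variable {l m : ℕ} {M : Type*} [MetricSpace M] {f : (Fin l → ℕ) → M} {g : (Fin m → ℕ) → M}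

theorem bddAbove_cutDistSet (hf : IsBddMap f) (hg : IsBddMap g) (L : Set ℕ)
    (P : Finset (Fin (l + m))) (hP : P.card = l) : BddAbove (cutDistSet f g L P hP) := by
  obtain ⟨Rf, hRf⟩ := hf
  obtain ⟨Rg, hRg⟩ := hg
  refine ⟨Rf + dist (f 0) (g 0) + Rg, ?_⟩
  rintro _ ⟨n, -, -, rfl⟩
  have := dist_triangle4 (f (subTuple n P hP)) (f 0) (g 0) (g (subTuple n Pᶜ (compl_card P hP)))
  linarith [hRf (subTuple n P hP) 0, hRg 0 (subTuple n Pᶜ (compl_card P hP))]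

theorem bddBelow_cutDistSet (L : Set ℕ) (P : Finset (Fin (l + m))) (hP : P.card = l) :
    BddBelow (cutDistSet f g L P hP) :=
  ⟨0, by rintro _ ⟨n, -, -, rfl⟩; exact dist_nonneg⟩

theorem cutDistSet_eq_univ {L : Set ℕ} (hL : L.Infinite) (P : Finset (Fin (l + m)))
    (hP : P.card = l) :
    cutDistSet f g L P hP = cutDistSet (fun a => f (Nat.nth (· ∈ L) ∘ a))
      (fun b => g (Nat.nth (· ∈ L) ∘ b)) Set.univ P hP := by
  classical
  ext d
  constructor
  · rintro ⟨n, hn, hnL, rfl⟩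
    refine ⟨fun j => Nat.count (· ∈ L) (n j),
      fun i j hij => Nat.count_strict_mono (hnL i) (hn hij), fun _ => Set.mem_univ _, ?_⟩
    simp only [subTuple, Function.comp_def, Nat.nth_count (hnL _)]
    rfl
  · rintro ⟨n, hn, -, rfl⟩
    exact ⟨Nat.nth (· ∈ L) ∘ n, (Nat.nth_strictMono hL).comp hn,
      fun _ => Nat.nth_mem_of_infinite hL _, rfl⟩

end CutDistSets

theorem sInf_cutDistSet_univ_le {l m : ℕ} {M : Type*} [MetricSpace M] {f : (Fin l → ℕ) → M}
    {g : (Fin m → ℕ) → M} (hM : HasPropQ M) {Q : Finset (Fin (l + m))} {hQ : Q.card = l}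
    (hbdd : BddAbove (cutDistSet f g Set.univ Q hQ)) (P : Finset (Fin (l + m)))
    (hP : P.card = l) :
    sInf (cutDistSet f g Set.univ P hP) ≤ sSup (cutDistSet f g Set.univ Q hQ) +
      QConst M * (2 * sSup (cutDistSet f g Set.univ Q hQ)) := by
  set lam := sSup (cutDistSet f g Set.univ Q hQ)
  have hlam : ∀ n, StrictMono n → cutDist f g Q hQ n ≤ lam :=
    fun n hn => le_csSup hbdd ⟨n, hn, fun _ => Set.mem_univ _, rfl⟩
  have key : ∀ C ∈ {C : ℝ | 0 ≤ C ∧ HasPropQConst M C},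
      sInf (cutDistSet f g Set.univ P hP) - lam ≤ C * (2 * lam) := by
    rintro C ⟨-, hC⟩
    obtain ⟨n, hn, hle⟩ := exists_cutDist_le hC P hP hlam
    have : sInf (cutDistSet f g Set.univ P hP) ≤ cutDist f g P hP n :=
      csInf_le (bddBelow_cutDistSet Set.univ P hP) ⟨n, hn, fun _ => Set.mem_univ _, rfl⟩
    linarith
  have hlam0 : 0 ≤ lam := dist_nonneg.trans (hlam _ Fin.val_strictMono)
  have : _ ≤ QConst M * (2 * lam) := le_sInf_mul hM (by positivity) key
  linarith

/-- Every metric space with property `Q` is cut stable with constant `8·Q_M + 1`. -/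
theorem stmt8 (M : Type*) [MetricSpace M] (hQ : HasPropQ M) :
    CutStableWith M (8 * QConst M + 1) := by
  intro l m f g hf hg L hL P Q hP hQc
  have hbdd := bddAbove_cutDistSet hf hg L Q hQc
  have hlam0 : 0 ≤ sSup (cutDistSet f g L Q hQc) :=
    Real.sSup_nonneg (by rintro _ ⟨n, -, -, rfl⟩; exact dist_nonneg)
  rw [cutDistSet_eq_univ hL] at hbdd hlam0 ⊢
  rw [cutDistSet_eq_univ hL]
  have hQM : 0 ≤ QConst M := Real.sInf_nonneg fun _ hC => hC.1
  nlinarith [sInf_cutDistSet_univ_le hQ hbdd P hP, mul_nonneg hQM hlam0]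
end

section
/- With N_t^Ū as above, one has N_t^Ū(0 ⊕ Σ_{i=1}^k a_i e_i) ≤ 2·N_t^Ū(x ⊕ Σ_{i=1}^k a_i e_i) for all x ∈ X and (a_i) ∈ ℝ^k. Consequently N_t^Ū is a norm on X ⊕ ℝ^k extending the norm of X, with respect to which the unit vector basis of ℝ^k is a normalized monotone basis. -/
open Filter Topology
open scoped ZeroAtInfty ENNReal NNReal

/-!
`N = treeNorm U t` is an iterated ultrafilter limit of the seminorms
`(x, a) ↦ ‖x + Σ aᵢ t(n₀, …, nᵢ)‖`, hence a seminorm, with `N(x, 0) = ‖x‖` and `N(0, eᵢ) = 1`.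
The point is monotonicity of the basis: if `aᵢ` is the last nonzero coefficient, the innermost
limit in `N(x, a)` is `lim_{b, Uᵢ} ‖y + aᵢ t(v, b)‖`, which is at least `‖y‖` because `t(v, ·)` is
weakly null (test against a norming functional of `y`); dropping `aᵢ` leaves `‖y‖` instead.
Monotonicity gives `‖x‖ ≤ N(x, a)`, so `N(0, a) ≤ N(x, a) + ‖x‖ ≤ 2 N(x, a)`, and
`|aᵢ| = N(0, aᵢ eᵢ) ≤ 2 N(0, a)`, which makes `N` definite.
-/

theorem Ultrafilter.tendsto_limUnder_of_abs_le {α : Type*} (U : Ultrafilter α) {g : α → ℝ}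
    {R : ℝ} (h : ∀ a, |g a| ≤ R) : Tendsto g U (𝓝 (limUnder U g)) := by
  obtain ⟨c, -, hc⟩ := isCompact_Icc.ultrafilter_le_nhds (U.map g)
    (le_principal_iff.2 (Ultrafilter.mem_map.2 (univ_mem' fun a => abs_le.1 (h a))))
  exact tendsto_nhds_limUnder ⟨c, hc⟩

theorem Ultrafilter.abs_limUnder_le {α : Type*} (U : Ultrafilter α) {g : α → ℝ}
    {R : ℝ} (h : ∀ a, |g a| ≤ R) : |limUnder U g| ≤ R :=
  le_of_tendsto' (U.tendsto_limUnder_of_abs_le h).abs h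

theorem iterEventually.of_forall : ∀ {j : ℕ} {U : Fin j → Ultrafilter ℕ}
    {P : (Fin j → ℕ) → Prop}, (∀ n, P n) → iterEventually j U P
  | 0, _, _, h => h _
  | _ + 1, _, _, h => by
    simp only [iterEventually]
    exact iterEventually.of_forall fun _ => .of_forall fun _ => h _

theorem iterEventually.mono : ∀ {j : ℕ} {U : Fin j → Ultrafilter ℕ}
    {P Q : (Fin j → ℕ) → Prop}, iterEventually j U P → (∀ n, P n → Q n) →
    iterEventually j U Q
  | 0, _, _, _, hP, h => h _ hP
  | _ + 1, _, _, _, hP, h => by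
    simp only [iterEventually] at hP ⊢
    exact hP.mono fun _ hn => hn.mono fun _ => h _

section ultraLim

variable {R : ℝ}

theorem ultraLim_mono : ∀ {j : ℕ} {U : Fin j → Ultrafilter ℕ} {F G : (Fin j → ℕ) → ℝ}
    {S : ℝ}, (∀ n, |F n| ≤ R) → (∀ n, |G n| ≤ S) → iterEventually j U (fun n => F n ≤ G n) →
    ultraLim j U F ≤ ultraLim j U G
  | 0, _, _, _, _, _, _, h => h
  | _ + 1, U, _, _, _, hF, hG, h => by
    simp only [ultraLim, iterEventually] at h ⊢
    exact ultraLim_mono (fun _ => (U _).abs_limUnder_le fun _ => hF _)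
      (fun _ => (U _).abs_limUnder_le fun _ => hG _)
      (h.mono fun _ hn => le_of_tendsto_of_tendsto ((U _).tendsto_limUnder_of_abs_le
        fun _ => hF _) ((U _).tendsto_limUnder_of_abs_le fun _ => hG _) hn)

theorem ultraLim_const : ∀ {j : ℕ} (U : Fin j → Ultrafilter ℕ) (c : ℝ),
    ultraLim j U (fun _ => c) = c
  | 0, _, _ => rfl
  | _ + 1, _, c => by
    simp only [ultraLim, tendsto_const_nhds.limUnder_eq]
    exact ultraLim_const _ c

theorem ultraLim_add : ∀ {j : ℕ} {U : Fin j → Ultrafilter ℕ} {F G : (Fin j → ℕ) → ℝ}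
    {S : ℝ}, (∀ n, |F n| ≤ R) → (∀ n, |G n| ≤ S) →
    ultraLim j U (F + G) = ultraLim j U F + ultraLim j U G
  | 0, _, _, _, _, _, _ => rfl
  | _ + 1, U, _, _, _, hF, hG => by
    simp only [ultraLim]
    refine .trans (congrArg (ultraLim _ _) (funext fun n => ?_))
      (ultraLim_add (fun _ => (U _).abs_limUnder_le fun _ => hF _)
        (fun _ => (U _).abs_limUnder_le fun _ => hG _))
    exact (((U _).tendsto_limUnder_of_abs_le fun _ => hF _).add
      ((U _).tendsto_limUnder_of_abs_le fun _ => hG _)).limUnder_eq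

theorem ultraLim_const_mul : ∀ {j : ℕ} {U : Fin j → Ultrafilter ℕ} {F : (Fin j → ℕ) → ℝ}
    (c : ℝ), (∀ n, |F n| ≤ R) → ultraLim j U (fun n => c * F n) = c * ultraLim j U F
  | 0, _, _, _, _ => rfl
  | _ + 1, U, _, c, hF => by
    simp only [ultraLim]
    refine .trans (congrArg (ultraLim _ _) (funext fun n => ?_))
      (ultraLim_const_mul c fun _ => (U _).abs_limUnder_le fun _ => hF _)
    exact (((U _).tendsto_limUnder_of_abs_le fun _ => hF _).const_mul c).limUnder_eq

theorem ultraLim_comp_castLE {j k : ℕ} (h : j ≤ k) (U : Fin k → Ultrafilter ℕ)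
    (F : (Fin j → ℕ) → ℝ) :
    ultraLim k U (fun n => F (fun i => n (Fin.castLE h i))) =
      ultraLim j (fun i => U (Fin.castLE h i)) F := by
  induction k, h using Nat.le_induction with
  | base => rfl
  | succ k hjk ih =>
    have hsnoc : ∀ (n : Fin k → ℕ) (b : ℕ) (i : Fin j),
        (Fin.snoc n b : Fin (k + 1) → ℕ) (Fin.castLE (hjk.trans k.le_succ) i) =
          n (Fin.castLE hjk i) :=
      fun n b i => Fin.snoc_castSucc (α := fun _ => ℕ) b n (Fin.castLE hjk i)
    simp only [ultraLim, hsnoc, tendsto_const_nhds.limUnder_eq]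
    exact ih _

end ultraLim

theorem norm_le_of_tendsto_norm_add {E ι : Type*} [NormedAddCommGroup E] [NormedSpace ℝ E]
    {l : Filter ι} [l.NeBot] (y : E) {x : ι → E} {c : ℝ}
    (hx : ∀ φ : E →L[ℝ] ℝ, Tendsto (fun i => φ (x i)) l (𝓝 0))
    (hc : Tendsto (fun i => ‖y + x i‖) l (𝓝 c)) : ‖y‖ ≤ c := by
  obtain ⟨φ, hφ, hφy⟩ := exists_dual_vector'' ℝ y
  have hlim : Tendsto (fun i => φ (y + x i)) l (𝓝 ‖y‖) := by
    simpa [hφy] using (hx φ).const_add (φ y)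
  refine le_of_tendsto_of_tendsto hlim hc (.of_forall fun i => ?_)
  exact (le_abs_self _).trans ((φ.le_opNorm _).trans (mul_le_of_le_one_left (norm_nonneg _) hφ))

theorem Fin.sum_eq_sum_castLE {M : Type*} [AddCommMonoid M] {j k : ℕ} (h : j ≤ k)
    (f : Fin k → M) (hf : ∀ i : Fin k, j ≤ i.1 → f i = 0) :
    ∑ i, f i = ∑ i : Fin j, f (i.castLE h) := by
  calc ∑ i, f i = ∑ i ∈ Finset.univ.map (Fin.castLEEmb h), f i := by
        refine (Finset.sum_subset (Finset.subset_univ _) fun i _ hi => hf i ?_).symm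
        by_contra! hij
        exact hi (Finset.mem_map.2 ⟨⟨i, hij⟩, Finset.mem_univ _, rfl⟩)
    _ = ∑ i : Fin j, f (i.castLE h) := Finset.sum_map _ _ _

def truncTo {M : Type*} [Zero M] {k : ℕ} (j : ℕ) (a : Fin k → M) : Fin k → M :=
  fun i => if i.1 < j then a i else 0

theorem truncTo_zero {M : Type*} [Zero M] {k : ℕ} (a : Fin k → M) : truncTo 0 a = 0 := rfl

theorem truncTo_of_le {M : Type*} [Zero M] {k j : ℕ} (a : Fin k → M) (h : k ≤ j) :
    truncTo j a = a :=
  funext fun i => if_pos (i.isLt.trans_le h)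

section TreeNorm

variable {X : Type*} [NormedAddCommGroup X] [NormedSpace ℝ X] {k : ℕ}

/-- `Σ_{i < j} aᵢ t(v₀, …, vᵢ)`, the first `j` terms of the vector normed in `treeNorm`. -/
def branchSum (t : TreeU X k) (a : Fin k → ℝ) {j : ℕ} (h : j ≤ k) (v : Fin j → ℕ) : X :=
  ∑ i : Fin j, a (i.castLE h) • t (i.castLE h) (fun p => v (p.castLE i.isLt))

variable {U : Fin k → Ultrafilter ℕ} {t : TreeU X k}

theorem treeNorm_eq_ultraLim (x : X) (a : Fin k → ℝ) :
    treeNorm U t x a = ultraLim k U (fun n => ‖x + branchSum t a le_rfl n‖) := rfl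

theorem norm_branchSum_le (ht : NormalizedU t) (a : Fin k → ℝ) {j : ℕ} (h : j ≤ k)
    (v : Fin j → ℕ) : ‖branchSum t a h v‖ ≤ k * ‖a‖ := by
  refine (norm_sum_le _ _).trans ?_
  calc ∑ i : Fin j, ‖a (i.castLE h) • t (i.castLE h) (fun p => v (p.castLE i.isLt))‖
      ≤ ∑ _i : Fin j, ‖a‖ := by
        gcongr with i
        rw [norm_smul, ht, mul_one]
        exact norm_le_pi_norm a _
    _ ≤ k * ‖a‖ := by
        rw [Finset.sum_const, Finset.card_univ, Fintype.card_fin, nsmul_eq_mul]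
        gcongr

theorem abs_norm_add_branchSum_le (ht : NormalizedU t) (x : X) (a : Fin k → ℝ) {j : ℕ}
    (h : j ≤ k) (v : Fin j → ℕ) : |‖x + branchSum t a h v‖| ≤ ‖x‖ + k * ‖a‖ := by
  rw [abs_norm]
  exact (norm_add_le _ _).trans (by gcongr; exact norm_branchSum_le ht a h v)

theorem branchSum_add (a b : Fin k → ℝ) {j : ℕ} (h : j ≤ k) (v : Fin j → ℕ) :
    branchSum t (a + b) h v = branchSum t a h v + branchSum t b h v := by
  simp only [branchSum, Pi.add_apply, add_smul, Finset.sum_add_distrib]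

theorem branchSum_smul (c : ℝ) (a : Fin k → ℝ) {j : ℕ} (h : j ≤ k) (v : Fin j → ℕ) :
    branchSum t (c • a) h v = c • branchSum t a h v := by
  simp only [branchSum, Pi.smul_apply, smul_eq_mul, mul_smul, Finset.smul_sum]

theorem branchSum_snoc (a : Fin k → ℝ) (i : Fin k) (v : Fin i → ℕ) (b : ℕ) :
    branchSum t a (i.isLt : i.1 + 1 ≤ k) (Fin.snoc v b) =
      branchSum t a i.isLt.le v + a i • t i (Fin.snoc v b) := by
  rw [branchSum, Fin.sum_univ_castSucc]
  congr 1
  refine Finset.sum_congr rfl fun l _ => ?_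
  congr 2
  funext p
  exact Fin.snoc_castSucc (α := fun _ => ℕ) b v (p.castLE l.isLt)

theorem treeNorm_truncTo (x : X) (a : Fin k → ℝ) {j : ℕ} (h : j ≤ k) :
    treeNorm U t x (truncTo j a) =
      ultraLim j (fun i => U (i.castLE h)) (fun v => ‖x + branchSum t a h v‖) := by
  rw [← ultraLim_comp_castLE h, treeNorm_eq_ultraLim]
  congr with n
  rw [branchSum, branchSum, Fin.sum_eq_sum_castLE h _ fun i hi => by simp [truncTo, hi.not_gt]]
  simp [truncTo]

theorem treeNorm_truncTo_le_succ (ht : NormalizedU t)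
    (hw : WeaklyNullU U t) (x : X) (a : Fin k → ℝ) (i : Fin k) :
    treeNorm U t x (truncTo i a) ≤ treeNorm U t x (truncTo (i + 1) a) := by
  rw [treeNorm_truncTo x a i.isLt.le, treeNorm_truncTo x a i.isLt]
  simp only [ultraLim]
  refine ultraLim_mono (abs_norm_add_branchSum_le ht x a _)
    (fun v => (U _).abs_limUnder_le fun b => abs_norm_add_branchSum_le ht x a _ _)
    ((hw i).mono fun v hv => ?_)
  have hx : ∀ φ : X →L[ℝ] ℝ, Tendsto (fun b => φ (a i • t i (Fin.snoc v b))) (U i) (𝓝 0) :=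
    fun φ => by simpa using (hv φ).const_mul (a i)
  have hlim := (U i).tendsto_limUnder_of_abs_le fun b =>
    abs_norm_add_branchSum_le ht x a i.isLt (Fin.snoc v b)
  simp only [branchSum_snoc, ← add_assoc] at hlim ⊢
  exact norm_le_of_tendsto_norm_add _ hx hlim

theorem treeNorm_truncTo_le (ht : NormalizedU t)
    (hw : WeaklyNullU U t) (x : X) (a : Fin k → ℝ) (j : ℕ) :
    treeNorm U t x (truncTo j a) ≤ treeNorm U t x a := by
  have hmono : Monotone fun j => treeNorm U t x (truncTo j a) :=
    monotone_nat_of_le_succ fun j => by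
      rcases lt_or_ge j k with hj | hj
      · exact treeNorm_truncTo_le_succ ht hw x a ⟨j, hj⟩
      · rw [truncTo_of_le a hj, truncTo_of_le a (hj.trans j.le_succ)]
  rcases le_total j k with hj | hj
  · simpa only [truncTo_of_le a le_rfl] using hmono hj
  · rw [truncTo_of_le a hj]

theorem treeNorm_zero_right (x : X) :
    treeNorm U t x 0 = ‖x‖ := by
  simp [treeNorm, ultraLim_const]

theorem norm_le_treeNorm (ht : NormalizedU t)
    (hw : WeaklyNullU U t) (x : X) (a : Fin k → ℝ) : ‖x‖ ≤ treeNorm U t x a := by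
  simpa only [truncTo_zero, treeNorm_zero_right] using treeNorm_truncTo_le ht hw x a 0

theorem treeNorm_smul (ht : NormalizedU t) (c : ℝ) (x : X)
    (a : Fin k → ℝ) : treeNorm U t (c • x) (c • a) = |c| * treeNorm U t x a := by
  simp only [treeNorm_eq_ultraLim, branchSum_smul, ← smul_add, norm_smul, Real.norm_eq_abs]
  exact ultraLim_const_mul _ (abs_norm_add_branchSum_le ht x a le_rfl)

theorem treeNorm_add_le (ht : NormalizedU t) (x₁ x₂ : X)
    (a₁ a₂ : Fin k → ℝ) :
    treeNorm U t (x₁ + x₂) (a₁ + a₂) ≤ treeNorm U t x₁ a₁ + treeNorm U t x₂ a₂ := by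
  have h₁ := abs_norm_add_branchSum_le ht x₁ a₁ le_rfl
  have h₂ := abs_norm_add_branchSum_le ht x₂ a₂ le_rfl
  simp only [treeNorm_eq_ultraLim]
  rw [← ultraLim_add h₁ h₂]
  refine ultraLim_mono (abs_norm_add_branchSum_le ht _ _ le_rfl)
    (fun n => (abs_add_le _ _).trans (add_le_add (h₁ n) (h₂ n)))
    (iterEventually.of_forall fun n => ?_)
  rw [branchSum_add, add_add_add_comm]
  exact norm_add_le _ _

theorem treeNorm_zero_single (ht : NormalizedU t) (i : Fin k) :
    treeNorm U t 0 (Pi.single i 1) = 1 := by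
  simp [treeNorm, Pi.single_apply, ht i, ultraLim_const]

theorem treeNorm_zero_left_le (ht : NormalizedU t)
    (hw : WeaklyNullU U t) (x : X) (a : Fin k → ℝ) :
    treeNorm U t 0 a ≤ 2 * treeNorm U t x a := by
  calc treeNorm U t 0 a = treeNorm U t (x + -x) (a + 0) := by simp
    _ ≤ treeNorm U t x a + ‖x‖ := by
        simpa [treeNorm_zero_right] using treeNorm_add_le ht x (-x) a 0
    _ ≤ 2 * treeNorm U t x a := by linarith [norm_le_treeNorm ht hw x a]

theorem smul_single_eq_truncTo_sub (a : Fin k → ℝ) (i : Fin k) :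
    a i • Pi.single i 1 = truncTo (i + 1) a - truncTo i a := by
  ext l
  rcases lt_trichotomy l i with hl | rfl | hl
  · simp [truncTo, hl.ne, hl, hl.le]
  · simp [truncTo]
  · simp [truncTo, hl.ne', hl.not_gt, Nat.not_lt.2 hl]

theorem abs_apply_le_two_mul_treeNorm (ht : NormalizedU t)
    (hw : WeaklyNullU U t) (a : Fin k → ℝ) (i : Fin k) :
    |a i| ≤ 2 * treeNorm U t 0 a := by
  calc |a i| = treeNorm U t (a i • 0) (a i • Pi.single i 1) := by
        rw [treeNorm_smul ht, treeNorm_zero_single ht, mul_one]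
    _ = treeNorm U t (0 + (-1 : ℝ) • 0) (truncTo (i + 1) a + (-1 : ℝ) • truncTo i a) := by
        rw [smul_single_eq_truncTo_sub]; simp [sub_eq_add_neg]
    _ ≤ treeNorm U t 0 (truncTo (i + 1) a) + treeNorm U t 0 (truncTo i a) := by
        have := treeNorm_add_le (U := U) ht (0 : X) ((-1 : ℝ) • 0) (truncTo (i + 1) a)
          ((-1 : ℝ) • truncTo i a)
        rwa [treeNorm_smul ht, abs_neg, abs_one, one_mul] at this
    _ ≤ 2 * treeNorm U t 0 a := by
        linarith [treeNorm_truncTo_le ht hw 0 a (i + 1), treeNorm_truncTo_le ht hw 0 a i]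

theorem treeNorm_eq_zero (ht : NormalizedU t)
    (hw : WeaklyNullU U t) {x : X} {a : Fin k → ℝ} (h : treeNorm U t x a = 0) :
    x = 0 ∧ a = 0 := by
  refine ⟨norm_le_zero_iff.1 (h ▸ norm_le_treeNorm ht hw x a), funext fun i => ?_⟩
  have := (abs_apply_le_two_mul_treeNorm ht hw a i).trans (mul_le_mul_of_nonneg_left
    (treeNorm_zero_left_le ht hw x a) zero_le_two)
  rw [h, mul_zero, mul_zero] at this
  exact abs_nonpos_iff.1 this

end TreeNorm

theorem stmt12_general (X : Type*) [NormedAddCommGroup X] [NormedSpace ℝ X]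
    (k : ℕ) (U : Fin k → Ultrafilter ℕ)
    (t : TreeU X k) (ht : NormalizedU t) (hw : WeaklyNullU U t) :
    (∀ (x : X) (a : Fin k → ℝ), treeNorm U t 0 a ≤ 2 * treeNorm U t x a) ∧
    (∀ x : X, treeNorm U t x 0 = ‖x‖) ∧
    (∀ (c : ℝ) (x : X) (a : Fin k → ℝ),
      treeNorm U t (c • x) (c • a) = |c| * treeNorm U t x a) ∧
    (∀ (x₁ x₂ : X) (a₁ a₂ : Fin k → ℝ),
      treeNorm U t (x₁ + x₂) (a₁ + a₂) ≤ treeNorm U t x₁ a₁ + treeNorm U t x₂ a₂) ∧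
    (∀ (x : X) (a : Fin k → ℝ), treeNorm U t x a = 0 → x = 0 ∧ a = 0) ∧
    (∀ i : Fin k, treeNorm U t 0 (Pi.single i 1) = 1) ∧
    (∀ (x : X) (a : Fin k → ℝ) (j : ℕ), j ≤ k →
      treeNorm U t x (fun i => if i.1 < j then a i else 0) ≤ treeNorm U t x a) :=
  ⟨treeNorm_zero_left_le ht hw, treeNorm_zero_right, treeNorm_smul ht, treeNorm_add_le ht,
    fun _ _ => treeNorm_eq_zero ht hw, treeNorm_zero_single ht,
    fun x a j _ => treeNorm_truncTo_le ht hw x a j⟩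

/-- `N_t^{Ū}(0 ⊕ Σ aᵢ eᵢ) ≤ 2 N_t^{Ū}(x ⊕ Σ aᵢ eᵢ)`; consequently `N_t^{Ū}` is a norm on
`X ⊕ ℝ^k` extending the norm of `X`, for which `(eᵢ)` is a normalized monotone basis. -/
theorem stmt12 (X : Type*) [NormedAddCommGroup X] [NormedSpace ℝ X] [CompleteSpace X]
    (k : ℕ) (U : Fin k → Ultrafilter ℕ) (hU : ∀ i, FreeUF (U i))
    (t : TreeU X k) (ht : NormalizedU t) (hw : WeaklyNullU U t) :
    (∀ (x : X) (a : Fin k → ℝ), treeNorm U t 0 a ≤ 2 * treeNorm U t x a) ∧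
    (∀ x : X, treeNorm U t x 0 = ‖x‖) ∧
    (∀ (c : ℝ) (x : X) (a : Fin k → ℝ),
      treeNorm U t (c • x) (c • a) = |c| * treeNorm U t x a) ∧
    (∀ (x₁ x₂ : X) (a₁ a₂ : Fin k → ℝ),
      treeNorm U t (x₁ + x₂) (a₁ + a₂) ≤ treeNorm U t x₁ a₁ + treeNorm U t x₂ a₂) ∧
    (∀ (x : X) (a : Fin k → ℝ), treeNorm U t x a = 0 → x = 0 ∧ a = 0) ∧
    (∀ i : Fin k, treeNorm U t 0 (Pi.single i 1) = 1) ∧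
    (∀ (x : X) (a : Fin k → ℝ) (j : ℕ), j ≤ k →
      treeNorm U t x (fun i => if i.1 < j then a i else 0) ≤ treeNorm U t x a) :=
  stmt12_general X k U t ht hw
end
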